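/- Let G be a finite simple graph with weights ω : E → ℝ. Let D = {(u,v) : u adjacent to v} be the set of darts of G (virtual qubits), and define the thermal valence-bond-solid state on the 2|E| virtual qubits as ρ_VBS = ∏_{{u,v} ∈ E} (1/4)(1 + ω({u,v}) X_{(u,v)} Z_{(v,u)})(1 + ω({u,v}) Z_{(u,v)} X_{(v,u)}). Let W be the matrix from the physical space (V → Fin 2) to the virtual space (D → Fin 2) given by W(s, b) = 1 if for every dart (u,v), s(u,v) = b(u), and 0 otherwise (i.e. W = ⨂_u W_u maps each physical qubit u to the GHZ-type embedding of its domain of virtual qubits). Then Wᴴ * ρ_VBS * W = 4^{−|E|} • ∏_{u ∈ V} (1 + η_u • K_u), where η_u = ∏_{v ∈ N(u)} ω({u,v}) and K_u acts on the physical space. -/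

import Mathlib

open Matrix

set_option linter.unusedSectionVars false

noncomputable section

namespace ClusterState


/-- The single-qubit Pauli `X` matrix. -/
def PX : Matrix (Fin 2) (Fin 2) ℂ := !![0, 1; 1, 0]

/-- The single-qubit Pauli `Z` matrix. -/
def PZ : Matrix (Fin 2) (Fin 2) ℂ := !![1, 0; 0, -1]

variable {V : Type*} [Fintype V] [DecidableEq V]

/-- The one-qubit operator `M` acting on the tensor factor `u` of the
`|V|`-qubit space `(V → Fin 2)`, and the identity on all other factors. -/
def oneSite (u : V) (M : Matrix (Fin 2) (Fin 2) ℂ) :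
    Matrix (V → Fin 2) (V → Fin 2) ℂ :=
  Matrix.of fun s t => if ∀ v, v ≠ u → s v = t v then M (s u) (t u) else 0

/-- Pauli `X` acting on tensor factor `u`. -/
def XAt (u : V) : Matrix (V → Fin 2) (V → Fin 2) ℂ := oneSite u PX

/-- Pauli `Z` acting on tensor factor `u`. -/
def ZAt (u : V) : Matrix (V → Fin 2) (V → Fin 2) ℂ := oneSite u PZ

lemma fin2_cases : ∀ a : Fin 2, a = 0 ∨ a = 1 := by decide

lemma ZAt_eq_diagonal (u : V) :
    ZAt u = Matrix.diagonal fun s => if s u = 1 then (-1 : ℂ) else 1 := by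
  funext s t
  simp only [ZAt, oneSite, Matrix.of_apply]
  by_cases hst : s = t
  · subst hst
    rw [Matrix.diagonal_apply_eq, if_pos fun v _ => rfl]
    rcases fin2_cases (s u) with h | h <;> rw [h] <;> norm_num [PZ]
  · rw [Matrix.diagonal_apply_ne _ hst]
    by_cases h : ∀ v, v ≠ u → s v = t v
    · rw [if_pos h]
      have hsu : s u ≠ t u := by
        intro he
        exact hst (funext fun v => by
          by_cases hv : v = u
          · rw [hv]; exact he
          · exact h v hv)
      rcases fin2_cases (s u) with h1 | h1 <;> rcases fin2_cases (t u) with h2 | h2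
      · exact absurd (h1.trans h2.symm) hsu
      · rw [h1, h2]; norm_num [PZ]
      · rw [h1, h2]; norm_num [PZ]
      · exact absurd (h1.trans h2.symm) hsu
    · rw [if_neg h]

lemma ZAt_commute (u w : V) : Commute (ZAt u) (ZAt w) := by
  have : ZAt u * ZAt w = ZAt w * ZAt u := by
    rw [ZAt_eq_diagonal, ZAt_eq_diagonal, Matrix.diagonal_mul_diagonal,
      Matrix.diagonal_mul_diagonal]
    exact congrArg Matrix.diagonal (mul_comm _ _)
  exact this

/-- The product `∏_{u ∈ S} Z_u` of Pauli `Z` operators over a finite set of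
sites (all factors commute). -/
def Zprod (S : Finset V) : Matrix (V → Fin 2) (V → Fin 2) ℂ :=
  S.noncommProd ZAt fun u _ w _ _ => ZAt_commute u w

/-- Flip the bit at site `u`. -/
def flip (u : V) (s : V → Fin 2) : V → Fin 2 := Function.update s u (s u + 1)

lemma flip_apply_same (u : V) (s : V → Fin 2) : flip u s u = s u + 1 := by
  unfold flip; exact Function.update_self u (s u + 1) s

lemma flip_apply_ne (u v : V) (s : V → Fin 2) (h : v ≠ u) : flip u s v = s v := by
  unfold flip; exact Function.update_of_ne h (s u + 1) s

lemma XAt_apply (u : V) (s t : V → Fin 2) :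
    XAt u s t = if t = flip u s then 1 else 0 := by
  simp only [XAt, oneSite, Matrix.of_apply]
  by_cases ht : t = flip u s
  · have hcond : ∀ v, v ≠ u → s v = t v := fun v hv => by
      rw [ht, flip_apply_ne u v s hv]
    rw [if_pos hcond, if_pos ht, ht, flip_apply_same]
    rcases fin2_cases (s u) with h | h <;> rw [h]
    · have e : (0 : Fin 2) + 1 = 1 := rfl
      rw [e]; norm_num [PX]
    · have e : (1 : Fin 2) + 1 = 0 := rfl
      rw [e]; norm_num [PX]
  · rw [if_neg ht]
    by_cases h : ∀ v, v ≠ u → s v = t v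
    · rw [if_pos h]
      have htu : t u ≠ s u + 1 := by
        intro he
        apply ht
        funext v
        by_cases hv : v = u
        · rw [hv, he, flip_apply_same]
        · rw [flip_apply_ne u v s hv]; exact (h v hv).symm
      have hts : t u = s u := by
        have key : ∀ a b : Fin 2, b ≠ a + 1 → b = a := by decide
        exact key (s u) (t u) htu
      rw [hts]
      rcases fin2_cases (s u) with h1 | h1 <;> rw [h1] <;> norm_num [PX]
    · rw [if_neg h]

lemma XAt_mul_apply (u : V) (A : Matrix (V → Fin 2) (V → Fin 2) ℂ)
    (s t : V → Fin 2) : (XAt u * A) s t = A (flip u s) t := by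
  rw [Matrix.mul_apply, Finset.sum_eq_single (flip u s)]
  · rw [XAt_apply, if_pos rfl, one_mul]
  · intro r _ hr
    rw [XAt_apply, if_neg hr, zero_mul]
  · intro h; exact absurd (Finset.mem_univ _) h

lemma flip_flip (u : V) (s : V → Fin 2) : flip u (flip u s) = s := by
  funext v
  by_cases hv : v = u
  · rw [hv, flip_apply_same, flip_apply_same]
    have key : ∀ a : Fin 2, a + 1 + 1 = a := by decide
    exact key (s u)
  · rw [flip_apply_ne _ _ _ hv, flip_apply_ne _ _ _ hv]

lemma mul_XAt_apply (u : V) (A : Matrix (V → Fin 2) (V → Fin 2) ℂ)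
    (s t : V → Fin 2) : (A * XAt u) s t = A s (flip u t) := by
  rw [Matrix.mul_apply, Finset.sum_eq_single (flip u t)]
  · rw [XAt_apply, if_pos (flip_flip u t).symm, mul_one]
  · intro r _ hr
    rw [XAt_apply, if_neg, mul_zero]
    intro he
    exact hr (by rw [he, flip_flip])
  · intro h; exact absurd (Finset.mem_univ _) h

lemma flip_comm (u w : V) (s : V → Fin 2) :
    flip u (flip w s) = flip w (flip u s) := by
  rcases eq_or_ne u w with rfl | h
  · rfl
  · funext v
    by_cases hu : v = u
    · rw [hu, flip_apply_same, flip_apply_ne w u s h,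
        flip_apply_ne w u (flip u s) h, flip_apply_same]
    · by_cases hw : v = w
      · rw [hw, flip_apply_ne u w (flip w s) (Ne.symm h), flip_apply_same,
          flip_apply_same, flip_apply_ne u w s (Ne.symm h)]
      · rw [flip_apply_ne u v (flip w s) hu, flip_apply_ne w v s hw,
          flip_apply_ne w v (flip u s) hw, flip_apply_ne u v s hu]

lemma XAt_commute (u w : V) : Commute (XAt u) (XAt w) := by
  have : XAt u * XAt w = XAt w * XAt u := by
    funext s t
    rw [XAt_mul_apply, XAt_mul_apply, XAt_apply, XAt_apply, flip_comm w u s]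
  exact this

/-- The product `∏_{u ∈ S} X_u` of Pauli `X` operators over a finite set of
sites (all factors commute). -/
def Xprod (S : Finset V) : Matrix (V → Fin 2) (V → Fin 2) ℂ :=
  S.noncommProd XAt fun u _ w _ _ => XAt_commute u w

/-- The cluster-state stabilizer operator `K_u = X_u * ∏_{v ∈ N(u)} Z_v`. -/
def K (G : SimpleGraph V) [DecidableRel G.Adj] (u : V) :
    Matrix (V → Fin 2) (V → Fin 2) ℂ :=
  XAt u * Zprod (G.neighborFinset u)

/-- Product of a family of pairwise commuting elements over a finite set. -/
def cprod {α M : Type*} [Monoid M] (S : Finset α) (f : α → M)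
    (h : ∀ u ∈ S, ∀ w ∈ S, Commute (f u) (f w)) : M :=
  S.noncommProd f fun u hu w hw _ => h u hu w hw



variable {V : Type*} [Fintype V] [DecidableEq V]

lemma XAt_mul_ZAt_of_ne {a b : V} (h : a ≠ b) : XAt a * ZAt b = ZAt b * XAt a := by
  funext s t
  rw [ZAt_eq_diagonal b]
  rw [Matrix.mul_diagonal, Matrix.diagonal_mul, XAt_apply]
  by_cases ht : t = flip a s
  · rw [if_pos ht, one_mul, mul_one, ht, flip_apply_ne a b s (Ne.symm h)]
  · rw [if_neg ht, zero_mul, mul_zero]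

lemma XAt_mul_ZAt_same (u : V) : XAt u * ZAt u = -(ZAt u * XAt u) := by
  funext s t
  rw [ZAt_eq_diagonal u]
  rw [Matrix.neg_apply, Matrix.mul_diagonal, Matrix.diagonal_mul, XAt_apply]
  by_cases ht : t = flip u s
  · rw [if_pos ht, one_mul, mul_one, ht, flip_apply_same]
    rcases fin2_cases (s u) with h | h <;> rw [h]
    · have e : (0 : Fin 2) + 1 = 1 := rfl
      rw [e, if_pos rfl, if_neg (by decide : ¬((0:Fin 2) = 1))]
    · have e : (1 : Fin 2) + 1 = 0 := rfl
      rw [e, if_neg (by decide : ¬((0:Fin 2) = 1)), if_pos rfl]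
      norm_num
  · rw [if_neg ht, zero_mul, mul_zero, neg_zero]

lemma ZAt_mul_XAt_same (u : V) : ZAt u * XAt u = -(XAt u * ZAt u) := by
  rw [XAt_mul_ZAt_same u, neg_neg]

lemma XZ_ZX_commute {a b : V} (h : a ≠ b) :
    (XAt a * ZAt b) * (ZAt a * XAt b) = (ZAt a * XAt b) * (XAt a * ZAt b) := by
  have hL : (XAt a * ZAt b) * (ZAt a * XAt b)
      = -(XAt a * (ZAt a * (XAt b * ZAt b))) := by
    calc (XAt a * ZAt b) * (ZAt a * XAt b)
        = XAt a * (ZAt b * (ZAt a * XAt b)) := by rw [mul_assoc]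
      _ = XAt a * (ZAt a * (ZAt b * XAt b)) := by
          rw [← mul_assoc (ZAt b), (ZAt_commute b a).eq, mul_assoc]
      _ = XAt a * (ZAt a * -(XAt b * ZAt b)) := by rw [ZAt_mul_XAt_same b]
      _ = -(XAt a * (ZAt a * (XAt b * ZAt b))) := by rw [mul_neg, mul_neg]
  have hR : (ZAt a * XAt b) * (XAt a * ZAt b)
      = -(XAt a * (ZAt a * (XAt b * ZAt b))) := by
    calc (ZAt a * XAt b) * (XAt a * ZAt b)
        = ZAt a * (XAt b * (XAt a * ZAt b)) := by rw [mul_assoc]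
      _ = ZAt a * (XAt a * (XAt b * ZAt b)) := by
          rw [← mul_assoc (XAt b), (XAt_commute b a).eq, mul_assoc]
      _ = (ZAt a * XAt a) * (XAt b * ZAt b) := by rw [mul_assoc]
      _ = (-(XAt a * ZAt a)) * (XAt b * ZAt b) := by rw [ZAt_mul_XAt_same a]
      _ = -(XAt a * (ZAt a * (XAt b * ZAt b))) := by rw [neg_mul, mul_assoc]
  rw [hL, hR]

lemma one_add_smul_mul_comm {n : Type*} [Fintype n] [DecidableEq n]
    {A B : Matrix n n ℂ} (c : ℝ) (h : A * B = B * A) :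
    (1 + c • A) * (1 + c • B) = (1 + c • B) * (1 + c • A) := by
  simp only [add_mul, mul_add, one_mul, mul_one, smul_mul_assoc, mul_smul_comm, smul_add, h]
  abel

variable (G : SimpleGraph V) [DecidableRel G.Adj]

/-- The operator attached to the (oriented) bond `(u,v)` of the thermal
valence-bond-solid state:
`(1/4)(1 + ω X_{(u,v)} Z_{(v,u)})(1 + ω Z_{(u,v)} X_{(v,u)})`. -/
def bondAux (ω : Sym2 V → ℝ) (u v : V) :
    Matrix (G.Dart → Fin 2) (G.Dart → Fin 2) ℂ :=
  if h : G.Adj u v then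
    (4 : ℂ)⁻¹ • ((1 + ω s(u, v) • (XAt (⟨(u, v), h⟩ : G.Dart) * ZAt ⟨(v, u), h.symm⟩)) *
      (1 + ω s(u, v) • (ZAt (⟨(u, v), h⟩ : G.Dart) * XAt ⟨(v, u), h.symm⟩)))
  else 1

lemma bondAux_symm (ω : Sym2 V → ℝ) (u v : V) :
    bondAux G ω u v = bondAux G ω v u := by
  by_cases h : G.Adj u v
  · rw [bondAux, bondAux, dif_pos h, dif_pos h.symm,
      (Sym2.eq_swap : s(v, u) = s(u, v))]
    have hab : (⟨(u, v), h⟩ : G.Dart) ≠ ⟨(v, u), h.symm⟩ := by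
      intro hEq
      exact G.ne_of_adj h (congrArg (fun d : G.Dart => d.toProd.1) hEq)
    show (4 : ℂ)⁻¹ • ((1 + ω s(u, v) • (XAt (⟨(u, v), h⟩ : G.Dart) * ZAt ⟨(v, u), h.symm⟩)) *
        (1 + ω s(u, v) • (ZAt (⟨(u, v), h⟩ : G.Dart) * XAt ⟨(v, u), h.symm⟩)))
      = (4 : ℂ)⁻¹ • ((1 + ω s(u, v) • (XAt (⟨(v, u), h.symm⟩ : G.Dart) * ZAt ⟨(u, v), h⟩)) *
        (1 + ω s(u, v) • (ZAt (⟨(v, u), h.symm⟩ : G.Dart) * XAt ⟨(u, v), h⟩)))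
    rw [XAt_mul_ZAt_of_ne (Ne.symm hab), ← XAt_mul_ZAt_of_ne hab]
    rw [one_add_smul_mul_comm _ (XZ_ZX_commute hab)]
  · rw [bondAux, bondAux, dif_neg h, dif_neg fun h' => h h'.symm]

/-- The bond operator of an (unordered) edge of the graph. -/
def bond (ω : Sym2 V → ℝ) : Sym2 V → Matrix (G.Dart → Fin 2) (G.Dart → Fin 2) ℂ :=
  Sym2.lift ⟨bondAux G ω, bondAux_symm G ω⟩

/-- The isometry `W = ⨂_u W_u` mapping each physical qubit `u` to the
GHZ-type embedding on its domain of virtual qubits (darts emanating from `u`):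
`W(s, b) = 1` iff `s(u,v) = b(u)` for every dart `(u,v)`. -/
def Wvbs : Matrix (G.Dart → Fin 2) (V → Fin 2) ℂ :=
  Matrix.of fun s b => if ∀ d : G.Dart, s d = b d.toProd.1 then 1 else 0

/-- `η_u = ∏_{v ∈ N(u)} ω({u,v})`. -/
def eta (ω : Sym2 V → ℝ) (u : V) : ℝ :=
  ∏ v ∈ G.neighborFinset u, ω s(u, v)



/-!
Both sides are computed entry by entry in the computational basis. Since `Z_{(u,v)}` and
`X_{(v,u)}` commute, the bond factor of the edge of a dart `d` is
`(1 + ω K'_d)(1 + ω K'_{d̄})/4`, where `K'_d = X_d Z_{d̄}` is the cluster stabilizer of the graph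
on darts pairing each dart with its reverse. So both sides are products `∏ (1 + c_u K_u)` over
the vertices of some graph, and such a product has an explicit entry at `(s, t)`: it vanishes
unless `s` and `t` differ only on the vertices taken, and is otherwise a product of one factor
per vertex where they differ (`clusterCoeff`); this is checked by multiplying in one factor at a
time. Conjugating by `W` evaluates the dart-graph entry at configurations constant on each
domain, and grouping the darts by their source turns it into the entry for `G` with weights
`η_u = ∏_{v ∈ N(u)} ω({u,v})`.
-/

section ClusterProduct

variable {ι : Type*} [Fintype ι] [DecidableEq ι]

def zSign (x : Fin 2) : ℂ := if x = 1 then -1 else 1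

lemma zSign_add_one (x : Fin 2) : zSign (x + 1) = -zSign x := by
  rcases fin2_cases x with rfl | rfl <;> norm_num [zSign]

lemma eq_add_one_of_ne {a b : Fin 2} (h : a ≠ b) : b = a + 1 := by
  revert a b; decide

lemma add_one_ne_self (a : Fin 2) : a + 1 ≠ a := by
  revert a; decide

lemma flip_ne_iff {u : ι} {s t : ι → Fin 2} (h : s u ≠ t u) (v : ι) :
    flip u s v ≠ t v ↔ v ≠ u ∧ s v ≠ t v := by
  rcases eq_or_ne v u with rfl | hv
  · simp [flip_apply_same, ← eq_add_one_of_ne h]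
  · simp [flip_apply_ne _ _ _ hv, hv]

lemma Zprod_eq_diagonal (S : Finset ι) :
    Zprod S = diagonal fun s => ∏ v ∈ S, zSign (s v) := by
  induction S using Finset.induction_on with
  | empty => exact (Finset.noncommProd_empty _ _).trans (by simp [diagonal_one])
  | insert u S hu ih =>
    have hinsert : Zprod (insert u S) = ZAt u * Zprod S :=
      Finset.noncommProd_insert_of_notMem S u ZAt _ hu
    rw [hinsert, ih, ZAt_eq_diagonal, diagonal_mul_diagonal]
    simp only [Finset.prod_insert hu]
    rfl

lemma K_mul_apply (H : SimpleGraph ι) [DecidableRel H.Adj] (u : ι)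
    (M : Matrix (ι → Fin 2) (ι → Fin 2) ℂ) (s t : ι → Fin 2) :
    (K H u * M) s t = (∏ v ∈ H.neighborFinset u, zSign (s v)) * M (flip u s) t := by
  rw [K, mul_assoc, XAt_mul_apply, Zprod_eq_diagonal, diagonal_mul]
  congr 1
  refine Finset.prod_congr rfl fun v hv => ?_
  rw [flip_apply_ne u v s (H.ne_of_adj ((H.mem_neighborFinset u v).mp hv)).symm]

/-- The factor `i` on flipped sites makes every edge inside the flipped set contribute
`i² = -1`, the sign produced by moving `X_u` past `Z_u` in a product of stabilizers. -/
def siteFactor (x y : Fin 2) : ℂ := (if x = y then 1 else Complex.I) * zSign x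

lemma siteFactor_self (x : Fin 2) : siteFactor x x = zSign x := by simp [siteFactor]

lemma siteFactor_of_ne {x y : Fin 2} (h : x ≠ y) : siteFactor x y = Complex.I * zSign x := by
  simp [siteFactor, h]

lemma siteFactor_mul_ite (x y : Fin 2) :
    siteFactor x y * (if x = y then 1 else -Complex.I) = zSign x := by
  by_cases h : x = y
  · simp [h, siteFactor_self]
  · rw [siteFactor_of_ne h, if_neg h]
    linear_combination (-zSign x) * Complex.I_mul_I

variable (H : SimpleGraph ι) [DecidableRel H.Adj] (c : ι → ℝ)

def clusterCoeff (s t : ι → Fin 2) : ℂ :=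
  ∏ w, if s w = t w then 1 else (c w : ℂ) * ∏ v ∈ H.neighborFinset w, siteFactor (s v) (t v)

def clusterMatrix (U : Finset ι) : Matrix (ι → Fin 2) (ι → Fin 2) ℂ :=
  of fun s t => if ∀ v, s v ≠ t v → v ∈ U then clusterCoeff H c s t else 0

lemma prod_siteFactor_flip {u : ι} {s t : ι → Fin 2} (h : s u ≠ t u) (w : ι) :
    ∏ v ∈ H.neighborFinset w, siteFactor (s v) (t v)
      = (if u ∈ H.neighborFinset w then -Complex.I else 1) *
          ∏ v ∈ H.neighborFinset w, siteFactor (flip u s v) (t v) := by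
  have hflip : ∀ v ∈ (H.neighborFinset w).erase u,
      siteFactor (s v) (t v) = siteFactor (flip u s v) (t v) :=
    fun v hv => by rw [flip_apply_ne u v s (Finset.ne_of_mem_erase hv)]
  split_ifs with hu
  · rw [← Finset.mul_prod_erase _ _ hu, ← Finset.mul_prod_erase _ _ hu,
      Finset.prod_congr rfl hflip, flip_apply_same, ← eq_add_one_of_ne h, siteFactor_self,
      siteFactor_of_ne h, eq_add_one_of_ne h, zSign_add_one]
    ring
  · rw [one_mul, ← Finset.erase_eq_of_notMem hu, Finset.prod_congr rfl hflip]

/-- Flipping `s` at `u` removes the factor of `u` and multiplies the factor of each flipped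
neighbour of `u` by `-i`; these `-i` turn the `siteFactor`s around `u` into plain signs. -/
lemma clusterCoeff_eq_of_ne {u : ι} {s t : ι → Fin 2} (h : s u ≠ t u) :
    clusterCoeff H c s t
      = c u * (∏ v ∈ H.neighborFinset u, zSign (s v)) * clusterCoeff H c (flip u s) t := by
  set f : (ι → Fin 2) → ι → ℂ := fun r w =>
    if r w = t w then 1 else (c w : ℂ) * ∏ v ∈ H.neighborFinset w, siteFactor (r v) (t v)
  have hfu : f (flip u s) u = 1 := by
    simp only [f, flip_apply_same, ← eq_add_one_of_ne h, if_true]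
  have hf : ∀ w ∈ Finset.univ.erase u,
      f s w = (if w ∈ H.neighborFinset u then (if s w = t w then 1 else -Complex.I) else 1) *
        f (flip u s) w := by
    intro w hw
    have hwu := Finset.ne_of_mem_erase hw
    simp only [f, flip_apply_ne u w s hwu, prod_siteFactor_flip H h w,
      SimpleGraph.mem_neighborFinset, H.adj_comm w u]
    split_ifs <;> ring
  have hu_nbr : (Finset.univ.erase u) ∩ H.neighborFinset u = H.neighborFinset u := by
    ext v
    simp only [Finset.mem_inter, Finset.mem_erase, Finset.mem_univ, and_true,
      and_iff_right_iff_imp]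
    exact fun hv => ((H.mem_neighborFinset u v).mp hv).ne'
  have hz : (∏ v ∈ H.neighborFinset u, siteFactor (s v) (t v)) *
      ∏ v ∈ H.neighborFinset u, (if s v = t v then 1 else -Complex.I)
      = ∏ v ∈ H.neighborFinset u, zSign (s v) := by
    rw [← Finset.prod_mul_distrib]
    exact Finset.prod_congr rfl fun v _ => siteFactor_mul_ite _ _
  calc clusterCoeff H c s t = f s u * ∏ w ∈ Finset.univ.erase u, f s w :=
        (Finset.mul_prod_erase _ _ (Finset.mem_univ u)).symm
    _ = (c u * ∏ v ∈ H.neighborFinset u, siteFactor (s v) (t v)) *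
          ((∏ v ∈ H.neighborFinset u, (if s v = t v then 1 else -Complex.I)) *
            ∏ w ∈ Finset.univ.erase u, f (flip u s) w) := by
        rw [Finset.prod_congr rfl hf, Finset.prod_mul_distrib, Finset.prod_ite_mem, hu_nbr]
        simp only [f, if_neg h]
    _ = c u * (∏ v ∈ H.neighborFinset u, zSign (s v)) *
          (f (flip u s) u * ∏ w ∈ Finset.univ.erase u, f (flip u s) w) := by
        rw [hfu, ← hz]
        ring
    _ = _ := by rw [Finset.mul_prod_erase _ _ (Finset.mem_univ u)]; rfl

lemma one_add_smul_K_mul_clusterMatrix {U : Finset ι} {u : ι} (hu : u ∉ U) :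
    (1 + c u • K H u) * clusterMatrix H c U = clusterMatrix H c (insert u U) := by
  ext s t
  rw [add_mul, one_mul, Matrix.add_apply, smul_mul, Matrix.smul_apply, K_mul_apply,
    Complex.real_smul]
  simp only [clusterMatrix, of_apply]
  by_cases hsu : s u = t u
  · have hflip : ¬ ∀ v, flip u s v ≠ t v → v ∈ U := fun hall =>
      hu (hall u (by rw [flip_apply_same, ← hsu]; exact add_one_ne_self _))
    have hcond : (∀ v, s v ≠ t v → v ∈ U) ↔ ∀ v, s v ≠ t v → v ∈ insert u U := by
      refine forall_congr' fun v => imp_congr_right fun hv => ?_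
      rw [Finset.mem_insert, or_iff_right (by rintro rfl; exact hv hsu)]
    rw [if_neg hflip, mul_zero, mul_zero, add_zero]
    exact if_congr hcond rfl rfl
  · have hcond : (∀ v, flip u s v ≠ t v → v ∈ U) ↔ ∀ v, s v ≠ t v → v ∈ insert u U := by
      refine forall_congr' fun v => ?_
      rw [flip_ne_iff hsu, and_imp, Finset.mem_insert]
      by_cases hv : v = u <;> simp [hv, hsu]
    rw [if_neg (fun hall => hu (hall u hsu)), zero_add, if_congr hcond rfl rfl,
      clusterCoeff_eq_of_ne H c hsu]
    split_ifs <;> ring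

lemma clusterMatrix_empty : clusterMatrix H c ∅ = 1 := by
  ext s t
  by_cases hst : s = t
  · subst hst
    simp [clusterMatrix, clusterCoeff]
  · obtain ⟨v, hv⟩ := Function.ne_iff.mp hst
    simp only [clusterMatrix, of_apply, Finset.notMem_empty, imp_false, not_not]
    rw [if_neg fun hall => hv (hall v), one_apply_ne hst]

lemma clusterMatrix_univ_apply (s t : ι → Fin 2) :
    clusterMatrix H c Finset.univ s t = clusterCoeff H c s t := by
  simp [clusterMatrix]

lemma cprod_one_add_smul_K (U : Finset ι)
    (hc : ∀ a ∈ U, ∀ b ∈ U, Commute (1 + c a • K H a) (1 + c b • K H b)) :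
    cprod U (fun u => 1 + c u • K H u) hc = clusterMatrix H c U := by
  induction U using Finset.induction_on with
  | empty => exact (Finset.noncommProd_empty _ _).trans (clusterMatrix_empty H c).symm
  | insert u U hu ih =>
    rw [← one_add_smul_K_mul_clusterMatrix H c hu,
      ← ih fun a ha b hb => hc a (Finset.mem_insert_of_mem ha) b (Finset.mem_insert_of_mem hb)]
    exact Finset.noncommProd_insert_of_notMem U u _ _ hu

end ClusterProduct

section Darts

variable {V : Type*} [Fintype V] [DecidableEq V] (G : SimpleGraph V) [DecidableRel G.Adj]

def dartPairing : SimpleGraph G.Dart where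
  Adj d d' := d' = d.symm
  symm := ⟨fun d d' (h : d' = d.symm) => by rw [h, SimpleGraph.Dart.symm_symm]⟩
  loopless := ⟨fun d (h : d = d.symm) => d.symm_ne h.symm⟩

instance : DecidableRel (dartPairing G).Adj :=
  fun d d' => inferInstanceAs (Decidable (d' = d.symm))

lemma dartPairing_neighborFinset (d : G.Dart) : (dartPairing G).neighborFinset d = {d.symm} := by
  ext d'
  rw [SimpleGraph.mem_neighborFinset, Finset.mem_singleton]
  rfl

lemma K_dartPairing (d : G.Dart) : K (dartPairing G) d = XAt d * ZAt d.symm := by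
  rw [K, dartPairing_neighborFinset, Zprod, Finset.noncommProd_singleton]

variable (ω : Sym2 V → ℝ)

lemma bond_edge (d : G.Dart) :
    bond G ω d.edge = (4 : ℂ)⁻¹ • ((1 + ω d.edge • K (dartPairing G) d) *
      (1 + ω d.symm.edge • K (dartPairing G) d.symm)) := by
  obtain ⟨⟨u, v⟩, h⟩ := d
  rw [K_dartPairing, K_dartPairing, SimpleGraph.Dart.edge_symm, SimpleGraph.Dart.symm_symm,
    XAt_mul_ZAt_of_ne (SimpleGraph.Dart.symm_ne _)]
  exact dif_pos h

lemma filter_edge_mem_insert {e : Sym2 V} {E : Finset (Sym2 V)} {d : G.Dart}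
    (hd : d.edge = e) :
    Finset.univ.filter (fun d' : G.Dart => d'.edge ∈ insert e E)
      = insert d (insert d.symm (Finset.univ.filter fun d' : G.Dart => d'.edge ∈ E)) := by
  ext d'
  simp [← hd, SimpleGraph.dart_edge_eq_iff, or_assoc]

lemma cprod_bond (E : Finset (Sym2 V)) (hE : E ⊆ G.edgeFinset)
    (hc : ∀ a ∈ E, ∀ b ∈ E, Commute (bond G ω a) (bond G ω b)) :
    cprod E (bond G ω) hc = ((4 : ℂ) ^ E.card)⁻¹ •
      clusterMatrix (dartPairing G) (fun d => ω d.edge)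
        (Finset.univ.filter fun d : G.Dart => d.edge ∈ E) := by
  induction E using Finset.induction_on with
  | empty =>
    simp only [Finset.notMem_empty, Finset.filter_false, clusterMatrix_empty, Finset.card_empty,
      pow_zero, inv_one, one_smul]
    exact Finset.noncommProd_empty _ _
  | insert e E he ih =>
    obtain ⟨d, rfl⟩ : ∃ d : G.Dart, d.edge = e := by
      have he' : e ∈ G.edgeSet := G.mem_edgeFinset.mp (hE (Finset.mem_insert_self e E))
      obtain ⟨v, w⟩ := e
      exact ⟨⟨(v, w), he'⟩, rfl⟩
    have hsymm : d.symm ∉ Finset.univ.filter fun d' : G.Dart => d'.edge ∈ E := by simpa using he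
    have hd : d ∉ insert d.symm (Finset.univ.filter fun d' : G.Dart => d'.edge ∈ E) := by
      simpa [(SimpleGraph.Dart.symm_ne d).symm] using he
    have hc' : ∀ a ∈ E, ∀ b ∈ E, Commute (bond G ω a) (bond G ω b) :=
      fun a ha b hb => hc a (Finset.mem_insert_of_mem ha) b (Finset.mem_insert_of_mem hb)
    have hinsert :
        cprod (insert d.edge E) (bond G ω) hc = bond G ω d.edge * cprod E (bond G ω) hc' :=
      Finset.noncommProd_insert_of_notMem _ _ _ _ he
    rw [hinsert, ih (fun x hx => hE (Finset.mem_insert_of_mem hx)), bond_edge,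
      filter_edge_mem_insert G rfl, Finset.card_insert_of_notMem he,
      ← one_add_smul_K_mul_clusterMatrix _ _ hd, ← one_add_smul_K_mul_clusterMatrix _ _ hsymm,
      Matrix.smul_mul, Matrix.mul_smul, smul_smul, mul_assoc, pow_succ, mul_inv, mul_comm]

lemma prod_dart_eq_prod_prod_neighborFinset {M : Type*} [CommMonoid M] (f : V → V → M) :
    ∏ d : G.Dart, f d.fst d.snd = ∏ u, ∏ v ∈ G.neighborFinset u, f u v := by
  rw [← Finset.prod_fiberwise Finset.univ fun d : G.Dart => d.fst]
  refine Finset.prod_congr rfl fun u _ => ?_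
  refine Finset.prod_bij (fun d _ => d.snd) (fun d hd => ?_) (fun d₁ hd₁ d₂ hd₂ h => ?_)
    (fun v hv => ?_) (fun d hd => ?_)
  · rw [Finset.mem_filter] at hd
    exact (G.mem_neighborFinset _ _).mpr (hd.2 ▸ d.adj)
  · rw [Finset.mem_filter] at hd₁ hd₂
    exact SimpleGraph.Dart.ext _ _ (Prod.ext (hd₁.2.trans hd₂.2.symm) h)
  · exact ⟨⟨(u, v), (G.mem_neighborFinset _ _).mp hv⟩, by simp, rfl⟩
  · rw [(Finset.mem_filter.mp hd).2]

lemma clusterCoeff_dartPairing (b b' : V → Fin 2) :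
    clusterCoeff (dartPairing G) (fun d => ω d.edge) (fun d => b d.fst) (fun d => b' d.fst)
      = clusterCoeff G (eta G ω) b b' := by
  simp only [clusterCoeff, dartPairing_neighborFinset, Finset.prod_singleton,
    SimpleGraph.Dart.symm_toProd, Prod.fst_swap]
  refine (prod_dart_eq_prod_prod_neighborFinset G
    fun u v => if b u = b' u then 1 else (ω s(u, v) : ℂ) * siteFactor (b v) (b' v)).trans
      (Finset.prod_congr rfl fun u _ => ?_)
  split_ifs <;> simp [Finset.prod_mul_distrib, eta]

lemma conjTranspose_Wvbs_mul_mul_Wvbs_apply (A : Matrix (G.Dart → Fin 2) (G.Dart → Fin 2) ℂ)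
    (b b' : V → Fin 2) :
    ((Wvbs G)ᴴ * A * Wvbs G) b b' = A (fun d => b d.fst) (fun d => b' d.fst) := by
  have hW : ∀ s b, Wvbs G s b = if (fun d : G.Dart => b d.fst) = s then 1 else 0 := by
    intro s b
    simp only [Wvbs, of_apply, funext_iff, eq_comm]
  simp [Matrix.mul_apply, hW]

end Darts

/-- the thermal VBS state is converted into the (unnormalized)
thermal cluster state by the domain-wise isometry `W`:
`Wᴴ ρ_VBS W = 4^{−|E|} ∏_u (1 + η_u K_u)` with `η_u = ∏_{v ∈ N(u)} ω({u,v})`. -/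
theorem Wvbs_conj_VBS_eq_thermal_cluster
    {V : Type*} [Fintype V] [DecidableEq V]
    (G : SimpleGraph V) [DecidableRel G.Adj] (ω : Sym2 V → ℝ)
    (hE : ∀ e ∈ G.edgeFinset, ∀ e' ∈ G.edgeFinset, Commute (bond G ω e) (bond G ω e'))
    (hK : ∀ u w : V,
      Commute ((1 : Matrix (V → Fin 2) (V → Fin 2) ℂ) + eta G ω u • K G u)
        (1 + eta G ω w • K G w)) :
    (Wvbs G)ᴴ * cprod G.edgeFinset (bond G ω) hE * Wvbs G
      = ((4 : ℂ) ^ G.edgeFinset.card)⁻¹ •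
          cprod Finset.univ (fun u => 1 + eta G ω u • K G u)
            (fun u _ w _ => hK u w) := by
  have hdarts : Finset.univ.filter (fun d : G.Dart => d.edge ∈ G.edgeFinset) = Finset.univ :=
    Finset.filter_true_of_mem fun d _ => G.mem_edgeFinset.mpr d.edge_mem
  ext b b'
  rw [conjTranspose_Wvbs_mul_mul_Wvbs_apply, cprod_bond G ω _ subset_rfl, cprod_one_add_smul_K,
    Matrix.smul_apply, Matrix.smul_apply, hdarts, clusterMatrix_univ_apply,
    clusterMatrix_univ_apply, clusterCoeff_dartPairing]

end ClusterState
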